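/- arXiv:2401.15370 — 3 statements merged into one kernel-verified Lean document; each statement's English description precedes it below -/
import Mathlib

section
/- Let $m > 1$ and let $w : (0,\infty) \to \mathbb{R}$ be measurable with $\|w\|^2 := \int_0^\infty (1+\rho^2)^m w(\rho)^2 \,\rho\,d\rho < \infty$. Define $u(r) = \int_r^\infty w(\rho)\,d\rho$ for $r > 0$. Then there is a constant $C$ depending only on $m$ such that $|u(r)| \leq C\, \|w\| \cdot \frac{1 + \sqrt{\max(\ln(1/r),0)}}{(1+r)^m}$ for all $r > 0$. -/
open Real MeasureTheory

-- pointwise: on Ioi r with 1 ≤ r, 1/(ρ(1+ρ²)^m) ≤ ρ^(-(1+2m))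
lemma vvpb_tail (m : ℝ) (hm : 1 < m) {r : ℝ} (hr : 1 ≤ r) :
    ∫⁻ ρ in Set.Ioi r, ENNReal.ofReal (1 / (ρ * (1 + ρ ^ 2) ^ m))
      ≤ ENNReal.ofReal (r ^ (-(2 * m)) / (2 * m)) := by
  have hr0 : (0:ℝ) < r := lt_of_lt_of_le one_pos hr
  have hp : -(1 + 2 * m) < -1 := by linarith
  have step1 : ∫⁻ ρ in Set.Ioi r, ENNReal.ofReal (1 / (ρ * (1 + ρ ^ 2) ^ m))
      ≤ ∫⁻ ρ in Set.Ioi r, ENNReal.ofReal (ρ ^ (-(1 + 2 * m))) := by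
    refine lintegral_mono_ae ?_
    rw [ae_restrict_iff' measurableSet_Ioi]
    filter_upwards with ρ hρ
    have hρ0 : (0:ℝ) < ρ := lt_trans hr0 hρ
    refine ENNReal.ofReal_le_ofReal ?_
    have h1 : ρ ^ ((1:ℝ) + 2 * m) = ρ * (ρ ^ 2) ^ m := by
      rw [Real.rpow_add hρ0, Real.rpow_one]
      congr 1
      rw [← Real.rpow_natCast ρ 2, ← Real.rpow_mul hρ0.le]
      norm_num
    have h2 : (ρ ^ 2 : ℝ) ^ m ≤ (1 + ρ ^ 2) ^ m :=
      Real.rpow_le_rpow (sq_nonneg ρ) (by linarith) (by linarith)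
    have h3 : ρ ^ ((1:ℝ) + 2 * m) ≤ ρ * (1 + ρ ^ 2) ^ m := by
      rw [h1]; exact mul_le_mul_of_nonneg_left h2 hρ0.le
    have h4 : (0:ℝ) < ρ ^ ((1:ℝ) + 2 * m) := Real.rpow_pos_of_pos hρ0 _
    rw [Real.rpow_neg hρ0.le, ← one_div]
    exact one_div_le_one_div_of_le h4 h3
  refine le_trans step1 (le_of_eq ?_)
  rw [← MeasureTheory.ofReal_integral_eq_lintegral_ofReal
      (integrableOn_Ioi_rpow_of_lt hp hr0)
      ((ae_restrict_iff' measurableSet_Ioi).2 (Filter.Eventually.of_forall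
        (fun ρ hρ => Real.rpow_nonneg (le_of_lt (lt_trans hr0 hρ)) _)))]
  congr 1
  rw [integral_Ioi_rpow_of_lt hp hr0]
  have : -(1 + 2 * m) + 1 = -(2 * m) := by ring
  rw [this]
  rw [neg_div, div_neg, neg_neg]


lemma vvpb_mid (m : ℝ) (hm : 1 < m) {r : ℝ} (hr : 0 < r) (hr1 : r ≤ 1) :
    ∫⁻ ρ in Set.Ioc r 1, ENNReal.ofReal (1 / (ρ * (1 + ρ ^ 2) ^ m))
      ≤ ENNReal.ofReal (Real.log (1 / r)) := by
  have step1 : ∫⁻ ρ in Set.Ioc r 1, ENNReal.ofReal (1 / (ρ * (1 + ρ ^ 2) ^ m))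
      ≤ ∫⁻ ρ in Set.Ioc r 1, ENNReal.ofReal (1 / ρ) := by
    refine lintegral_mono_ae ?_
    rw [ae_restrict_iff' measurableSet_Ioc]
    filter_upwards with ρ hρ
    have hρ0 : (0:ℝ) < ρ := lt_trans hr hρ.1
    refine ENNReal.ofReal_le_ofReal ?_
    have h2 : (1:ℝ) ≤ (1 + ρ ^ 2) ^ m :=
      Real.one_le_rpow (by nlinarith [sq_nonneg ρ]) (by linarith)
    have h3 : ρ ≤ ρ * (1 + ρ ^ 2) ^ m := le_mul_of_one_le_right hρ0.le h2
    exact one_div_le_one_div_of_le hρ0 h3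
  have hne : ∀ x : ℝ, x ∈ Set.uIcc r 1 → x ≠ 0 := by
    intro x hx
    rw [Set.uIcc_of_le hr1] at hx
    exact (lt_of_lt_of_le hr hx.1).ne'
  have hii : IntervalIntegrable (fun x : ℝ => 1 / x) volume r 1 :=
    intervalIntegral.intervalIntegrable_one_div hne continuousOn_id
  have hInt : IntegrableOn (fun x : ℝ => 1 / x) (Set.Ioc r 1) volume :=
    (intervalIntegrable_iff_integrableOn_Ioc_of_le hr1).1 hii
  refine le_trans step1 (le_of_eq ?_)
  rw [← MeasureTheory.ofReal_integral_eq_lintegral_ofReal hInt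
      ((ae_restrict_iff' measurableSet_Ioc).2 (Filter.Eventually.of_forall
        (fun ρ hρ => le_of_lt (by have : (0:ℝ) < ρ := lt_trans hr hρ.1; positivity))))]
  congr 1
  rw [← intervalIntegral.integral_of_le hr1]
  rw [integral_one_div (by intro h; exact (hne 0 h) rfl)]


lemma vvpb_cs (m : ℝ) (w : ℝ → ℝ) (hw : Measurable w)
    (hW : IntegrableOn (fun ρ : ℝ => (1 + ρ ^ 2) ^ m * w ρ ^ 2 * ρ) (Set.Ioi 0))
    {r K : ℝ} (hr : 0 < r) (hK : 0 ≤ K)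
    (hJ : ∫⁻ ρ in Set.Ioi r, ENNReal.ofReal (1 / (ρ * (1 + ρ ^ 2) ^ m)) ≤ ENNReal.ofReal K) :
    |∫ ρ in Set.Ioi r, w ρ| ≤
      Real.sqrt (∫ ρ in Set.Ioi (0:ℝ), (1 + ρ ^ 2) ^ m * w ρ ^ 2 * ρ) * Real.sqrt K := by
  set W : ℝ := ∫ ρ in Set.Ioi (0:ℝ), (1 + ρ ^ 2) ^ m * w ρ ^ 2 * ρ with hWdef
  have hW0 : 0 ≤ W := setIntegral_nonneg measurableSet_Ioi (fun ρ hρ =>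
    mul_nonneg (mul_nonneg (Real.rpow_nonneg (by positivity) _) (sq_nonneg _)) (le_of_lt hρ))
  by_cases hInt : IntegrableOn w (Set.Ioi r) volume
  · set S : ℝ → ℝ := fun ρ => ρ * (1 + ρ ^ 2) ^ m with hSdef
    have hSmeas : Measurable S := by fun_prop
    have hSpos : ∀ ρ : ℝ, 0 < ρ → 0 < S ρ := fun ρ hρ =>
      mul_pos hρ (Real.rpow_pos_of_pos (by positivity) _)
    set f : ℝ → ENNReal := fun ρ => ENNReal.ofReal (|w ρ| * Real.sqrt (S ρ)) with hfdef
    set g : ℝ → ENNReal := fun ρ => ENNReal.ofReal ((Real.sqrt (S ρ))⁻¹) with hgdef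
    have hfm : AEMeasurable f (volume.restrict (Set.Ioi r)) :=
      (ENNReal.measurable_ofReal.comp (hw.abs.mul hSmeas.sqrt)).aemeasurable
    have hgm : AEMeasurable g (volume.restrict (Set.Ioi r)) :=
      (ENNReal.measurable_ofReal.comp hSmeas.sqrt.inv).aemeasurable
    have hpq : Real.HolderConjugate 2 2 := Real.HolderConjugate.two_two
    have holder := ENNReal.lintegral_mul_le_Lp_mul_Lq (volume.restrict (Set.Ioi r)) hpq hfm hgm
    have step_eq : ∫⁻ ρ in Set.Ioi r, ENNReal.ofReal |w ρ|
        = ∫⁻ ρ in Set.Ioi r, (f * g) ρ := by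
      refine lintegral_congr_ae
        (Filter.eventuallyEq_of_mem (self_mem_ae_restrict measurableSet_Ioi) (fun ρ hρ => ?_))
      have hs : 0 < Real.sqrt (S ρ) := Real.sqrt_pos.2 (hSpos ρ (lt_trans hr hρ))
      simp only [Pi.mul_apply, hfdef, hgdef]
      rw [← ENNReal.ofReal_mul (mul_nonneg (abs_nonneg _) hs.le)]
      rw [mul_inv_cancel_right₀ hs.ne']
    have hf2 : (∫⁻ ρ in Set.Ioi r, f ρ ^ (2:ℝ)) ≤ ENNReal.ofReal W := by
      calc (∫⁻ ρ in Set.Ioi r, f ρ ^ (2:ℝ))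
          ≤ ∫⁻ ρ in Set.Ioi 0, f ρ ^ (2:ℝ) := lintegral_mono_set (Set.Ioi_subset_Ioi hr.le)
        _ = ∫⁻ ρ in Set.Ioi 0, ENNReal.ofReal ((1 + ρ ^ 2) ^ m * w ρ ^ 2 * ρ) := by
            refine lintegral_congr_ae
              (Filter.eventuallyEq_of_mem (self_mem_ae_restrict measurableSet_Ioi)
                (fun ρ hρ => ?_))
            have hs0 : 0 ≤ S ρ := (hSpos ρ hρ).le
            rw [hfdef]
            beta_reduce
            rw [ENNReal.ofReal_rpow_of_nonneg (mul_nonneg (abs_nonneg _) (Real.sqrt_nonneg _))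
              (by norm_num : (0:ℝ) ≤ 2)]
            congr 1
            have h2 : ((2:ℝ)) = ((2:ℕ):ℝ) := by norm_num
            rw [h2, Real.rpow_natCast]
            rw [mul_pow, sq_abs, Real.sq_sqrt hs0, hSdef]
            ring
        _ = ENNReal.ofReal W :=
            (MeasureTheory.ofReal_integral_eq_lintegral_ofReal hW
              ((ae_restrict_iff' measurableSet_Ioi).2 (Filter.Eventually.of_forall
                (fun ρ hρ => mul_nonneg (mul_nonneg (Real.rpow_nonneg (by positivity) _)
                  (sq_nonneg _)) (le_of_lt hρ))))).symm
    have hg2 : (∫⁻ ρ in Set.Ioi r, g ρ ^ (2:ℝ)) ≤ ENNReal.ofReal K := by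
      have heq : ∫⁻ ρ in Set.Ioi r, g ρ ^ (2:ℝ)
          = ∫⁻ ρ in Set.Ioi r, ENNReal.ofReal (1 / (ρ * (1 + ρ ^ 2) ^ m)) := by
        refine lintegral_congr_ae
          (Filter.eventuallyEq_of_mem (self_mem_ae_restrict measurableSet_Ioi)
            (fun ρ hρ => ?_))
        have hs0 : 0 < S ρ := hSpos ρ (lt_trans hr hρ)
        rw [hgdef]
        beta_reduce
        rw [ENNReal.ofReal_rpow_of_nonneg (inv_nonneg.2 (Real.sqrt_nonneg _))
          (by norm_num : (0:ℝ) ≤ 2)]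
        congr 1
        have h2 : ((2:ℝ)) = ((2:ℕ):ℝ) := by norm_num
        rw [h2, Real.rpow_natCast]
        rw [inv_pow, Real.sq_sqrt hs0.le, one_div]
      rw [heq]; exact hJ
    have key : (∫⁻ ρ in Set.Ioi r, ENNReal.ofReal |w ρ|)
        ≤ ENNReal.ofReal (Real.sqrt W * Real.sqrt K) := by
      rw [step_eq]
      refine le_trans holder ?_
      have h1 : (∫⁻ ρ in Set.Ioi r, f ρ ^ (2:ℝ)) ^ ((1:ℝ)/2)
          ≤ (ENNReal.ofReal W) ^ ((1:ℝ)/2) := ENNReal.rpow_le_rpow hf2 (by norm_num)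
      have h2 : (∫⁻ ρ in Set.Ioi r, g ρ ^ (2:ℝ)) ^ ((1:ℝ)/2)
          ≤ (ENNReal.ofReal K) ^ ((1:ℝ)/2) := ENNReal.rpow_le_rpow hg2 (by norm_num)
      refine le_trans (mul_le_mul' h1 h2) (le_of_eq ?_)
      rw [ENNReal.ofReal_rpow_of_nonneg hW0 (by norm_num : (0:ℝ) ≤ 1/2)]
      rw [ENNReal.ofReal_rpow_of_nonneg hK (by norm_num : (0:ℝ) ≤ 1/2)]
      rw [← ENNReal.ofReal_mul (Real.rpow_nonneg hW0 _)]
      rw [← Real.sqrt_eq_rpow, ← Real.sqrt_eq_rpow]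
    have habs : |∫ ρ in Set.Ioi r, w ρ| ≤ ∫ ρ in Set.Ioi r, |w ρ| := by
      simpa [Real.norm_eq_abs] using
        norm_integral_le_integral_norm (μ := volume.restrict (Set.Ioi r)) w
    refine le_trans habs ?_
    have h1 : ∫ ρ in Set.Ioi r, |w ρ|
        = (∫⁻ ρ in Set.Ioi r, ENNReal.ofReal |w ρ|).toReal := by
      rw [← MeasureTheory.ofReal_integral_eq_lintegral_ofReal hInt.abs
        (Filter.Eventually.of_forall (fun _ => abs_nonneg _))]
      rw [ENNReal.toReal_ofReal (integral_nonneg (fun _ => abs_nonneg _))]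
    rw [h1]
    exact ENNReal.toReal_le_of_le_ofReal
      (mul_nonneg (Real.sqrt_nonneg _) (Real.sqrt_nonneg _)) key
  · rw [MeasureTheory.integral_undef hInt]
    simpa using mul_nonneg (Real.sqrt_nonneg W) (Real.sqrt_nonneg K)

theorem vertical_velocity_pointwise_bound
    (m : ℝ) (hm : 1 < m) (w : ℝ → ℝ) (hw : Measurable w)
    (hW : IntegrableOn (fun ρ : ℝ => (1 + ρ ^ 2) ^ m * w ρ ^ 2 * ρ) (Set.Ioi 0)) :
    ∃ C : ℝ, 0 < C ∧ ∀ r : ℝ, 0 < r →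
      |∫ ρ in Set.Ioi r, w ρ|
        ≤ C * Real.sqrt (∫ ρ in Set.Ioi (0 : ℝ), (1 + ρ ^ 2) ^ m * w ρ ^ 2 * ρ)
            * ((1 + Real.sqrt (max (Real.log (1 / r)) 0)) / (1 + r) ^ m) := by
  have h2m : (0:ℝ) < 2 * m := by linarith
  set s : ℝ := Real.sqrt (1 / (2 * m)) with hsdef
  have hs0 : 0 ≤ s := Real.sqrt_nonneg _
  have hs2 : s ^ 2 = 1 / (2 * m) := Real.sq_sqrt (by positivity)
  set C : ℝ := 2 ^ m * (1 + s) with hCdef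
  have h2mpos : (0:ℝ) < 2 ^ m := Real.rpow_pos_of_pos two_pos m
  have hC : 0 < C := mul_pos h2mpos (by linarith)
  refine ⟨C, hC, fun r hr => ?_⟩
  set W : ℝ := ∫ ρ in Set.Ioi (0:ℝ), (1 + ρ ^ 2) ^ m * w ρ ^ 2 * ρ with hWdef
  have hsW : 0 ≤ Real.sqrt W := Real.sqrt_nonneg _
  set L : ℝ := max (Real.log (1 / r)) 0 with hLdef
  have hL0 : 0 ≤ L := le_max_right _ _
  have hP : (0:ℝ) < (1 + r) ^ m := Real.rpow_pos_of_pos (by linarith) m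
  -- reduce to the scalar inequality
  have main : ∀ K : ℝ, 0 ≤ K →
      (∫⁻ ρ in Set.Ioi r, ENNReal.ofReal (1 / (ρ * (1 + ρ ^ 2) ^ m)) ≤ ENNReal.ofReal K) →
      Real.sqrt K ≤ C * ((1 + Real.sqrt L) / (1 + r) ^ m) →
      |∫ ρ in Set.Ioi r, w ρ| ≤ C * Real.sqrt W * ((1 + Real.sqrt L) / (1 + r) ^ m) := by
    intro K hK0 hJ hsqrt
    refine le_trans (vvpb_cs m w hw hW hr hK0 hJ) ?_
    calc Real.sqrt W * Real.sqrt K ≤ Real.sqrt W * (C * ((1 + Real.sqrt L) / (1 + r) ^ m)) :=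
          mul_le_mul_of_nonneg_left hsqrt hsW
      _ = C * Real.sqrt W * ((1 + Real.sqrt L) / (1 + r) ^ m) := by ring
  by_cases hr1 : 1 ≤ r
  · -- large r
    have hLeq : L = 0 := by
      rw [hLdef]
      refine max_eq_right (Real.log_nonpos (by positivity) ?_)
      rw [div_le_one (lt_of_lt_of_le one_pos hr1)]; exact hr1
    refine main (r ^ (-(2 * m)) / (2 * m)) (by positivity) (vvpb_tail m hm hr1) ?_
    rw [hLeq, Real.sqrt_zero]
    have hrm : (0:ℝ) < r ^ m := Real.rpow_pos_of_pos hr m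
    have hX : Real.sqrt (r ^ (-(2 * m)) / (2 * m)) = (r ^ m)⁻¹ * s := by
      rw [div_eq_mul_inv, Real.sqrt_mul (Real.rpow_nonneg hr.le _), ← one_div, ← hsdef]
      congr 1
      have : r ^ (-(2 * m)) = ((r ^ m)⁻¹) ^ 2 := by
        rw [← Real.rpow_neg hr.le, ← Real.rpow_natCast (r ^ (-m)) 2, ← Real.rpow_mul hr.le]
        norm_num
        ring_nf
      rw [this, Real.sqrt_sq (by positivity)]
    rw [hX, add_zero, mul_one_div, le_div_iff₀ hP]
    have hP2 : (1 + r) ^ m ≤ 2 ^ m * r ^ m := by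
      rw [← Real.mul_rpow two_pos.le hr.le]
      exact Real.rpow_le_rpow (by linarith) (by linarith) (by linarith)
    calc (r ^ m)⁻¹ * s * (1 + r) ^ m ≤ (r ^ m)⁻¹ * s * (2 ^ m * r ^ m) := by
          refine mul_le_mul_of_nonneg_left hP2 (by positivity)
      _ = 2 ^ m * s := by field_simp
      _ ≤ C := by rw [hCdef]; nlinarith
  · -- small r
    push_neg at hr1
    have hlog0 : 0 ≤ Real.log (1 / r) := Real.log_nonneg ((le_div_iff₀ hr).2 (by linarith))
    have hLeq : L = Real.log (1 / r) := max_eq_left hlog0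
    have hsplit : ∫⁻ ρ in Set.Ioi r, ENNReal.ofReal (1 / (ρ * (1 + ρ ^ 2) ^ m))
        ≤ ENNReal.ofReal (Real.log (1 / r) + 1 / (2 * m)) := by
      have hun : Set.Ioc r 1 ∪ Set.Ioi (1:ℝ) = Set.Ioi r := Set.Ioc_union_Ioi_eq_Ioi hr1.le
      have hdisj : Disjoint (Set.Ioc r 1) (Set.Ioi (1:ℝ)) :=
        Set.disjoint_left.2 fun x hx hx' => absurd hx.2 (not_le.2 hx')
      rw [← hun, lintegral_union measurableSet_Ioi hdisj]
      have h1 := vvpb_mid m hm hr hr1.le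
      have h2 := vvpb_tail m hm (le_refl (1:ℝ))
      rw [Real.one_rpow] at h2
      refine le_trans (add_le_add h1 h2) ?_
      rw [← ENNReal.ofReal_add hlog0 (by positivity)]
    refine main (Real.log (1 / r) + 1 / (2 * m)) (by positivity) hsplit ?_
    rw [hLeq]
    set L' : ℝ := Real.log (1 / r)
    have hsL' : 0 ≤ Real.sqrt L' := Real.sqrt_nonneg _
    have step1 : Real.sqrt (L' + 1 / (2 * m)) ≤ Real.sqrt L' + s := by
      have h : L' + 1 / (2 * m) ≤ (Real.sqrt L' + s) ^ 2 := by
        have := Real.sq_sqrt hlog0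
        nlinarith
      refine le_trans (Real.sqrt_le_sqrt h) ?_
      rw [Real.sqrt_sq (by positivity)]
    refine le_trans step1 ?_
    have hCP : 1 + s ≤ C / (1 + r) ^ m := by
      rw [le_div_iff₀ hP]
      have hP2 : (1 + r) ^ m ≤ 2 ^ m :=
        Real.rpow_le_rpow (by linarith) (by linarith) (by linarith)
      calc (1 + s) * (1 + r) ^ m ≤ (1 + s) * 2 ^ m :=
            mul_le_mul_of_nonneg_left hP2 (by linarith)
        _ = C := by rw [hCdef]; ring
    calc Real.sqrt L' + s ≤ (1 + s) * (1 + Real.sqrt L') := by nlinarith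
      _ ≤ (C / (1 + r) ^ m) * (1 + Real.sqrt L') :=
          mul_le_mul_of_nonneg_right hCP (by linarith)
      _ = C * ((1 + Real.sqrt L') / (1 + r) ^ m) := by ring
end

section
/- Let $m > 1$ and let $\overline{w} : (0,\infty) \to \mathbb{R}$ satisfy $\int_0^\infty (1+\rho^2)^m \overline{w}(\rho)^2\,\rho\,d\rho < \infty$ and $\int_0^\infty \overline{w}(\rho)\,\rho\,d\rho = 0$. Define $\overline{v}_\theta(r) = \frac{1}{r}\int_0^r \overline{w}(\rho)\,\rho\,d\rho$. Then there is a constant $C$ depending only on $m$ such that $|\overline{v}_\theta(r)| \leq C\, (1+r)^{-m} \big(\int_0^\infty (1+\rho^2)^m \overline{w}(\rho)^2\,\rho\,d\rho\big)^{1/2}$ for all $r > 0$, and consequently $\int_0^\infty \overline{v}_\theta(r)^2\, r\,dr < \infty$. -/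
open Real MeasureTheory Set Filter Topology

lemma my_cauchy_schwarz {μ : Measure ℝ} {f g : ℝ → ℝ}
    (hf : AEStronglyMeasurable f μ) (hg : AEStronglyMeasurable g μ)
    (hf2 : Integrable (fun x => f x ^ 2) μ) (hg2 : Integrable (fun x => g x ^ 2) μ) :
    |∫ x, f x * g x ∂μ| ≤ Real.sqrt (∫ x, f x ^ 2 ∂μ) * Real.sqrt (∫ x, g x ^ 2 ∂μ) := by
  have habs : |∫ x, f x * g x ∂μ| ≤ ∫ x, |f x| * |g x| ∂μ := by
    simpa [Real.norm_eq_abs, abs_mul] using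
      norm_integral_le_integral_norm (fun x => f x * g x) (μ := μ)
  have hconj : Real.HolderConjugate 2 2 := Real.HolderConjugate.two_two
  have hfm : MemLp (fun x => |f x|) (ENNReal.ofReal 2) μ := by
    rw [show ENNReal.ofReal 2 = 2 by norm_num]
    rw [memLp_two_iff_integrable_sq (by simpa [Real.norm_eq_abs] using hf.norm)]
    simpa [sq_abs] using hf2
  have hgm : MemLp (fun x => |g x|) (ENNReal.ofReal 2) μ := by
    rw [show ENNReal.ofReal 2 = 2 by norm_num]
    rw [memLp_two_iff_integrable_sq (by simpa [Real.norm_eq_abs] using hg.norm)]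
    simpa [sq_abs] using hg2
  have holder := integral_mul_le_Lp_mul_Lq_of_nonneg hconj
    (Filter.Eventually.of_forall fun x => abs_nonneg (f x))
    (Filter.Eventually.of_forall fun x => abs_nonneg (g x)) hfm hgm
  have hr : ∀ x : ℝ, |x| ^ (2:ℝ) = x ^ 2 := by
    intro x
    rw [show (2:ℝ) = ((2:ℕ):ℝ) by norm_num, Real.rpow_natCast, sq_abs]
  simp only [hr] at holder
  calc |∫ x, f x * g x ∂μ| ≤ ∫ x, |f x| * |g x| ∂μ := habs
  _ ≤ (∫ x, f x ^ 2 ∂μ) ^ (1/(2:ℝ)) * (∫ x, g x ^ 2 ∂μ) ^ (1/(2:ℝ)) := holder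
  _ = Real.sqrt (∫ x, f x ^ 2 ∂μ) * Real.sqrt (∫ x, g x ^ 2 ∂μ) := by
      rw [Real.sqrt_eq_rpow, Real.sqrt_eq_rpow]

lemma tail_deriv (m : ℝ) (hm : 1 < m) (x : ℝ) :
    HasDerivAt (fun ρ : ℝ => -(1 + ρ ^ 2) ^ (1 - m) / (2 * (m - 1)))
      ((1 + x ^ 2) ^ (-m) * x) x := by
  have h1 : HasDerivAt (fun ρ : ℝ => 1 + ρ ^ 2) (2 * x) x := by
    have := (hasDerivAt_pow 2 x).const_add 1
    simp only [Nat.cast_ofNat, show (2:ℕ) - 1 = 1 from rfl, pow_one] at this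
    convert this using 1
  have h2 := (h1.rpow_const (p := 1 - m) (Or.inl (by positivity)))
  have h3 := (h2.neg).div_const (2 * (m - 1))
  refine h3.congr_deriv (Eq.symm ?_)
  have hne : (2:ℝ) * (m - 1) ≠ 0 := by intro h; nlinarith
  have h4 : (1:ℝ) - m - 1 = -m := by ring
  rw [h4, eq_div_iff hne]
  ring

lemma tail_tendsto (m : ℝ) (hm : 1 < m) :
    Tendsto (fun ρ : ℝ => -(1 + ρ ^ 2) ^ (1 - m) / (2 * (m - 1))) atTop (𝓝 0) := by
  have h1 : Tendsto (fun ρ : ℝ => 1 + ρ ^ 2) atTop atTop := by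
    apply tendsto_atTop_add_const_left
    exact (tendsto_pow_atTop (two_ne_zero)).comp tendsto_id
  have h2 : Tendsto (fun ρ : ℝ => (1 + ρ ^ 2) ^ (1 - m)) atTop (𝓝 0) := by
    have := (tendsto_rpow_neg_atTop (y := m - 1) (by linarith)).comp h1
    simpa [Function.comp_def, show -(m - 1) = 1 - m by ring] using this
  simpa using (h2.neg).div_const (2 * (m - 1))

lemma tail_integrable (m : ℝ) (hm : 1 < m) (r : ℝ) (hr : 0 ≤ r) :
    IntegrableOn (fun ρ : ℝ => (1 + ρ ^ 2) ^ (-m) * ρ) (Set.Ioi r) :=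
  integrableOn_Ioi_deriv_of_nonneg' (fun x _ => tail_deriv m hm x)
    (fun x hx => by
      have hx0 : 0 < x := lt_of_le_of_lt hr hx
      positivity)
    (tail_tendsto m hm)

lemma tail_value (m : ℝ) (hm : 1 < m) (r : ℝ) (hr : 0 ≤ r) :
    (∫ ρ in Set.Ioi r, (1 + ρ ^ 2) ^ (-m) * ρ) = (1 + r ^ 2) ^ (1 - m) / (2 * (m - 1)) := by
  rw [integral_Ioi_of_hasDerivAt_of_nonneg' (fun x _ => tail_deriv m hm x)
    (fun x hx => by
      have hx0 : 0 < x := lt_of_le_of_lt hr hx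
      positivity)
    (tail_tendsto m hm)]
  ring

lemma head_bound (m : ℝ) (hm : 1 < m) (r : ℝ) (hr : 0 ≤ r) :
    (∫ ρ in Set.Ioc 0 r, (1 + ρ ^ 2) ^ (-m) * ρ) ≤ r ^ 2 / 2 := by
  have h1 : (∫ ρ in Set.Ioc 0 r, (1 + ρ ^ 2) ^ (-m) * ρ) ≤ ∫ ρ in Set.Ioc 0 r, ρ := by
    apply setIntegral_mono_on
    · exact (tail_integrable m hm 0 le_rfl).mono_set Set.Ioc_subset_Ioi_self
    · exact (intervalIntegral.intervalIntegrable_id (a := 0) (b := r) (μ := volume)).1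
    · exact measurableSet_Ioc
    · intro x hx
      have hx0 : 0 < x := hx.1
      have h2 : (1 + x ^ 2) ^ (-m) ≤ 1 :=
        Real.rpow_le_one_of_one_le_of_nonpos (by nlinarith) (by linarith)
      nlinarith [Real.rpow_nonneg (show (0:ℝ) ≤ 1 + x ^ 2 by positivity) (-m)]
  have h2 : (∫ ρ in Set.Ioc 0 r, ρ) = r ^ 2 / 2 := by
    rw [← intervalIntegral.integral_of_le hr, _root_.integral_id]
    ring
  linarith

lemma weight_integrable (m : ℝ) (hm : 1 < m) :
    IntegrableOn (fun r : ℝ => (1 + r) ^ (1 - 2 * m)) (Set.Ioi 0) := by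
  apply integrableOn_Ioi_deriv_of_nonneg'
    (g := fun r : ℝ => -(1 + r) ^ (2 - 2 * m) / (2 * m - 2))
  · intro x hx
    have hx0 : (0:ℝ) < 1 + x := by simp at hx; linarith
    have h1 : HasDerivAt (fun r : ℝ => 1 + r) 1 x := by
      simpa using (hasDerivAt_id x).const_add 1
    have h2 := (h1.rpow_const (p := 2 - 2 * m) (Or.inl (ne_of_gt hx0)))
    have h3 := (h2.neg).div_const (2 * m - 2)
    refine h3.congr_deriv (Eq.symm ?_)
    have hne : (2:ℝ) * m - 2 ≠ 0 := by intro h; nlinarith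
    have h4 : (2:ℝ) - 2 * m - 1 = 1 - 2 * m := by ring
    rw [h4, eq_div_iff hne]
    ring
  · intro x hx
    have hx0 : 0 < x := hx
    positivity
  · have h1 : Tendsto (fun r : ℝ => 1 + r) atTop atTop :=
      tendsto_atTop_add_const_left _ _ tendsto_id
    have h2 : Tendsto (fun r : ℝ => (1 + r) ^ (2 - 2 * m)) atTop (𝓝 0) := by
      have := (tendsto_rpow_neg_atTop (y := 2 * m - 2) (by linarith)).comp h1
      simpa [Function.comp_def, show -(2 * m - 2) = 2 - 2 * m by ring] using this
    simpa using (h2.neg).div_const (2 * m - 2)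

lemma key_cs (m : ℝ) (hm : 1 < m) (w : ℝ → ℝ) (hw : Measurable w)
    (hW : IntegrableOn (fun ρ : ℝ => (1 + ρ ^ 2) ^ m * w ρ ^ 2 * ρ) (Set.Ioi 0))
    (s : Set ℝ) (hs : MeasurableSet s) (hss : s ⊆ Set.Ioi 0) :
    |∫ ρ in s, w ρ * ρ| ≤
      Real.sqrt (∫ ρ in Set.Ioi (0:ℝ), (1 + ρ ^ 2) ^ m * w ρ ^ 2 * ρ) *
        Real.sqrt (∫ ρ in s, (1 + ρ ^ 2) ^ (-m) * ρ) := by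
  set f : ℝ → ℝ := fun ρ => (1 + ρ ^ 2) ^ (m / 2) * w ρ * Real.sqrt ρ with hf
  set g : ℝ → ℝ := fun ρ => (1 + ρ ^ 2) ^ (-(m / 2)) * Real.sqrt ρ with hg
  have hb : ∀ ρ : ℝ, (0:ℝ) < 1 + ρ ^ 2 := fun ρ => by positivity
  have hfg : ∀ ρ ∈ s, w ρ * ρ = f ρ * g ρ := by
    intro ρ hρ
    have hρ0 : 0 < ρ := hss hρ
    simp only [hf, hg]
    rw [show (1 + ρ ^ 2) ^ (m / 2) * w ρ * Real.sqrt ρ *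
        ((1 + ρ ^ 2) ^ (-(m / 2)) * Real.sqrt ρ) =
        ((1 + ρ ^ 2) ^ (m / 2) * (1 + ρ ^ 2) ^ (-(m / 2))) * w ρ *
          (Real.sqrt ρ * Real.sqrt ρ) by ring,
      ← Real.rpow_add (hb ρ), Real.mul_self_sqrt hρ0.le]
    simp
  have hf2 : ∀ ρ ∈ s, f ρ ^ 2 = (1 + ρ ^ 2) ^ m * w ρ ^ 2 * ρ := by
    intro ρ hρ
    have hρ0 : 0 < ρ := hss hρ
    simp only [hf, mul_pow, Real.sq_sqrt hρ0.le, ← Real.rpow_natCast ((1 + ρ ^ 2) ^ (m / 2)) 2,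
      ← Real.rpow_mul (hb ρ).le]
    norm_num
  have hg2 : ∀ ρ ∈ s, g ρ ^ 2 = (1 + ρ ^ 2) ^ (-m) * ρ := by
    intro ρ hρ
    have hρ0 : 0 < ρ := hss hρ
    simp only [hg, mul_pow, Real.sq_sqrt hρ0.le, ← Real.rpow_natCast ((1 + ρ ^ 2) ^ (-(m / 2))) 2,
      ← Real.rpow_mul (hb ρ).le]
    norm_num
  have hfm : AEStronglyMeasurable f (volume.restrict s) := by
    apply Measurable.aestronglyMeasurable
    exact ((((continuous_const.add (continuous_pow 2)).rpow_const
      (fun x => Or.inl (by simp only [Pi.add_apply]; positivity))).measurable.mul hw)).mul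
      Real.continuous_sqrt.measurable
  have hgm : AEStronglyMeasurable g (volume.restrict s) := by
    apply Measurable.aestronglyMeasurable
    exact ((continuous_const.add (continuous_pow 2)).rpow_const
      (fun x => Or.inl (by simp only [Pi.add_apply]; positivity))).measurable.mul Real.continuous_sqrt.measurable
  have hif2 : IntegrableOn (fun ρ => f ρ ^ 2) s := by
    apply (hW.mono_set hss).congr
    exact (ae_restrict_iff' hs).2 (Filter.Eventually.of_forall fun ρ hρ => (hf2 ρ hρ).symm)
  have hig2 : IntegrableOn (fun ρ => g ρ ^ 2) s := by
    apply ((tail_integrable m hm 0 le_rfl).mono_set hss).congr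
    exact (ae_restrict_iff' hs).2 (Filter.Eventually.of_forall fun ρ hρ => (hg2 ρ hρ).symm)
  have h1 : (∫ ρ in s, w ρ * ρ) = ∫ ρ in s, f ρ * g ρ := setIntegral_congr_fun hs hfg
  have h2 : (∫ ρ in s, f ρ ^ 2) = ∫ ρ in s, (1 + ρ ^ 2) ^ m * w ρ ^ 2 * ρ :=
    setIntegral_congr_fun hs hf2
  have h3 : (∫ ρ in s, g ρ ^ 2) = ∫ ρ in s, (1 + ρ ^ 2) ^ (-m) * ρ :=
    setIntegral_congr_fun hs hg2
  have hcs := my_cauchy_schwarz hfm hgm hif2 hig2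
  rw [h1]
  rw [h2, h3] at hcs
  refine hcs.trans (mul_le_mul_of_nonneg_right ?_ (Real.sqrt_nonneg _))
  apply Real.sqrt_le_sqrt
  apply setIntegral_mono_set hW
  · exact (ae_restrict_iff' measurableSet_Ioi).2 (Filter.Eventually.of_forall fun ρ hρ => by
      have : (0:ℝ) < ρ := hρ
      positivity)
  · exact HasSubset.Subset.eventuallyLE hss
lemma pointwise_bound (m : ℝ) (hm : 1 < m) (w : ℝ → ℝ) (hw : Measurable w)
    (hW : IntegrableOn (fun ρ : ℝ => (1 + ρ ^ 2) ^ m * w ρ ^ 2 * ρ) (Set.Ioi 0))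
    (hint : IntegrableOn (fun ρ : ℝ => w ρ * ρ) (Set.Ioi 0))
    (hmean : (∫ ρ in Set.Ioi (0 : ℝ), w ρ * ρ) = 0) :
    ∀ r : ℝ, 0 < r →
      |(1 / r) * ∫ ρ in Set.Ioc (0 : ℝ) r, w ρ * ρ|
        ≤ (2 ^ m + 2 ^ m / Real.sqrt (m - 1)) * (1 + r) ^ (-m)
            * Real.sqrt (∫ ρ in Set.Ioi (0 : ℝ), (1 + ρ ^ 2) ^ m * w ρ ^ 2 * ρ) := by
  have hm0 : (0:ℝ) ≤ m := by linarith
  have hsm : 0 < Real.sqrt (m - 1) := Real.sqrt_pos.2 (by linarith)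
  have h2m : (0:ℝ) < 2 ^ m := Real.rpow_pos_of_pos two_pos m
  set sqW : ℝ := Real.sqrt (∫ ρ in Set.Ioi (0 : ℝ), (1 + ρ ^ 2) ^ m * w ρ ^ 2 * ρ) with hsqWdef
  have hsqW : 0 ≤ sqW := Real.sqrt_nonneg _
  set C : ℝ := 2 ^ m + 2 ^ m / Real.sqrt (m - 1) with hCdef
  intro r hr
  have h1r : (0:ℝ) < 1 + r := by linarith
  have hpow : (0:ℝ) < (1 + r) ^ (-m) := Real.rpow_pos_of_pos h1r _
  have habs : |(1 / r) * ∫ ρ in Set.Ioc (0:ℝ) r, w ρ * ρ|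
      = (1 / r) * |∫ ρ in Set.Ioc (0:ℝ) r, w ρ * ρ| := by
    rw [abs_mul, abs_of_pos (by positivity : (0:ℝ) < 1 / r)]
  rcases le_total r 1 with hle | hle
  · -- small r
    have h1 := key_cs m hm w hw hW (Set.Ioc 0 r) measurableSet_Ioc Set.Ioc_subset_Ioi_self
    have h2' : Real.sqrt (∫ ρ in Set.Ioc (0:ℝ) r, (1 + ρ ^ 2) ^ (-m) * ρ) ≤ r := by
      refine le_trans (Real.sqrt_le_sqrt (head_bound m hm r hr.le)) ?_
      calc Real.sqrt (r ^ 2 / 2) ≤ Real.sqrt (r ^ 2) :=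
            Real.sqrt_le_sqrt (by nlinarith)
        _ = r := Real.sqrt_sq hr.le
    have h3 : |∫ ρ in Set.Ioc (0:ℝ) r, w ρ * ρ| ≤ sqW * r :=
      h1.trans (mul_le_mul_of_nonneg_left h2' hsqW)
    have h4 : (1/r) * |∫ ρ in Set.Ioc (0:ℝ) r, w ρ * ρ| ≤ sqW := by
      calc (1/r) * |∫ ρ in Set.Ioc (0:ℝ) r, w ρ * ρ|
          ≤ (1/r) * (sqW * r) := mul_le_mul_of_nonneg_left h3 (by positivity)
        _ = sqW := by field_simp
    have h5 : (1:ℝ) ≤ (2:ℝ) ^ m * (1 + r) ^ (-m) := by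
      rw [Real.rpow_neg h1r.le, ← div_eq_mul_inv,
        le_div_iff₀ (Real.rpow_pos_of_pos h1r m), one_mul]
      exact Real.rpow_le_rpow (by linarith) (by linarith) hm0
    rw [habs]
    calc (1/r) * |∫ ρ in Set.Ioc (0:ℝ) r, w ρ * ρ| ≤ sqW := h4
      _ = 1 * sqW := (one_mul _).symm
      _ ≤ ((2:ℝ) ^ m * (1 + r) ^ (-m)) * sqW := mul_le_mul_of_nonneg_right h5 hsqW
      _ ≤ C * (1 + r) ^ (-m) * sqW := by
          have hc1 : (2:ℝ) ^ m ≤ C := le_add_of_nonneg_right (by positivity)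
          have := mul_le_mul_of_nonneg_right
            (mul_le_mul_of_nonneg_right hc1 hpow.le) hsqW
          linarith
  · -- large r
    have e0 : (0:ℝ) < 1 + r ^ 2 := by positivity
    have hIoi_sub : Set.Ioi r ⊆ Set.Ioi (0:ℝ) := Set.Ioi_subset_Ioi hr.le
    have hu : Set.Ioc (0:ℝ) r ∪ Set.Ioi r = Set.Ioi 0 := Set.Ioc_union_Ioi_eq_Ioi hr.le
    have hd : Disjoint (Set.Ioc (0:ℝ) r) (Set.Ioi r) := Set.Ioc_disjoint_Ioi le_rfl
    have hsplit := setIntegral_union hd measurableSet_Ioi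
      (hint.mono_set Set.Ioc_subset_Ioi_self) (hint.mono_set hIoi_sub)
    rw [hu, hmean] at hsplit
    have hIeq : |∫ ρ in Set.Ioc (0:ℝ) r, w ρ * ρ| = |∫ ρ in Set.Ioi r, w ρ * ρ| := by
      rw [show (∫ ρ in Set.Ioc (0:ℝ) r, w ρ * ρ) = -(∫ ρ in Set.Ioi r, w ρ * ρ) by linarith,
        abs_neg]
    have h1 := key_cs m hm w hw hW (Set.Ioi r) measurableSet_Ioi hIoi_sub
    rw [tail_value m hm r hr.le] at h1
    have hs1 : Real.sqrt ((1 + r ^ 2) ^ (1 - m) / (2 * (m - 1)))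
        ≤ (1 + r ^ 2) ^ ((1 - m)/2) / Real.sqrt (m - 1) := by
      rw [Real.sqrt_div (Real.rpow_nonneg e0.le _)]
      have hnum : Real.sqrt ((1 + r ^ 2) ^ (1 - m)) = (1 + r ^ 2) ^ ((1 - m)/2) := by
        rw [Real.sqrt_eq_rpow, ← Real.rpow_mul e0.le]
        ring_nf
      rw [hnum]
      apply div_le_div_of_nonneg_left (by positivity) hsm
      exact Real.sqrt_le_sqrt (by linarith)
    have hkey : (1/r) * (1 + r ^ 2) ^ ((1 - m)/2) ≤ 2 ^ m * (1 + r) ^ (-m) := by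
      have e1 : (1 + r) ^ (2:ℕ) ≤ 2 * (1 + r ^ 2) := by nlinarith
      have e2 : (2 * (1 + r ^ 2)) ^ ((1 - m)/2) ≤ ((1 + r) ^ (2:ℕ)) ^ ((1 - m)/2) :=
        Real.rpow_le_rpow_of_nonpos (by positivity) e1 (by linarith)
      have e3 : (((1 + r) ^ (2:ℕ) : ℝ)) ^ ((1 - m)/2) = (1 + r) ^ (1 - m) := by
        rw [← Real.rpow_natCast (1 + r) 2, ← Real.rpow_mul h1r.le]
        push_cast
        rw [show (2:ℝ) * ((1 - m)/2) = 1 - m by ring]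
      have e4 : ((2:ℝ) * (1 + r ^ 2)) ^ ((1 - m)/2)
          = (2:ℝ) ^ ((1 - m)/2) * (1 + r ^ 2) ^ ((1 - m)/2) :=
        Real.mul_rpow (by norm_num) e0.le
      have e5 : (1 + r ^ 2) ^ ((1 - m)/2) ≤ 2 ^ ((m - 1)/2) * (1 + r) ^ (1 - m) := by
        have hz2 : ((2:ℝ) ^ ((m - 1)/2)) * (2 ^ ((1 - m)/2)) = 1 := by
          rw [← Real.rpow_add two_pos, show (m - 1)/2 + (1 - m)/2 = (0:ℝ) by ring,
            Real.rpow_zero]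
        calc (1 + r ^ 2) ^ ((1 - m)/2)
            = ((2:ℝ) ^ ((m - 1)/2) * 2 ^ ((1 - m)/2)) * (1 + r ^ 2) ^ ((1 - m)/2) := by
              rw [hz2, one_mul]
          _ = 2 ^ ((m - 1)/2) * ((2:ℝ) ^ ((1 - m)/2) * (1 + r ^ 2) ^ ((1 - m)/2)) := by ring
          _ ≤ 2 ^ ((m - 1)/2) * (1 + r) ^ (1 - m) := by
              apply mul_le_mul_of_nonneg_left _ (by positivity)
              rw [← e4]
              exact e2.trans (le_of_eq e3)
      have e6 : (1:ℝ)/r ≤ 2/(1 + r) := by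
        rw [div_le_div_iff₀ hr h1r]
        linarith
      calc (1/r) * (1 + r ^ 2) ^ ((1 - m)/2)
          ≤ (2/(1 + r)) * (2 ^ ((m - 1)/2) * (1 + r) ^ (1 - m)) :=
            mul_le_mul e6 e5 (by positivity) (by positivity)
        _ = ((2:ℝ) ^ ((m - 1)/2) * 2) * ((1 + r) ^ (1 - m) * (1 + r)⁻¹) := by ring
        _ = 2 ^ ((m + 1)/2) * (1 + r) ^ (-m) := by
            have a1 : (2:ℝ) ^ ((m - 1)/2) * 2 = 2 ^ ((m + 1)/2) := by
              rw [show ((m + 1)/2) = ((m - 1)/2) + 1 by ring, Real.rpow_add two_pos,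
                Real.rpow_one]
            have a2 : (1 + r) ^ (1 - m) * (1 + r)⁻¹ = (1 + r) ^ (-m) := by
              rw [← Real.rpow_neg_one (1 + r), ← Real.rpow_add h1r,
                show (1 - m) + (-1:ℝ) = -m by ring]
            rw [a1, a2]
        _ ≤ 2 ^ m * (1 + r) ^ (-m) :=
            mul_le_mul_of_nonneg_right
              (Real.rpow_le_rpow_of_exponent_le one_le_two (by linarith)) hpow.le
    rw [habs, hIeq]
    calc (1/r) * |∫ ρ in Set.Ioi r, w ρ * ρ|
        ≤ (1/r) * (sqW * ((1 + r ^ 2) ^ ((1 - m)/2) / Real.sqrt (m - 1))) :=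
          mul_le_mul_of_nonneg_left
            (h1.trans (mul_le_mul_of_nonneg_left hs1 hsqW)) (by positivity)
      _ = (sqW / Real.sqrt (m - 1)) * ((1/r) * (1 + r ^ 2) ^ ((1 - m)/2)) := by ring
      _ ≤ (sqW / Real.sqrt (m - 1)) * (2 ^ m * (1 + r) ^ (-m)) :=
          mul_le_mul_of_nonneg_left hkey (by positivity)
      _ = (2 ^ m / Real.sqrt (m - 1)) * (1 + r) ^ (-m) * sqW := by ring
      _ ≤ C * (1 + r) ^ (-m) * sqW := by
          apply mul_le_mul_of_nonneg_right _ hsqW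
          apply mul_le_mul_of_nonneg_right _ hpow.le
          exact le_add_of_nonneg_left (by positivity)
theorem azimuthal_velocity_decay_bound
    (m : ℝ) (hm : 1 < m) (w : ℝ → ℝ) (hw : Measurable w)
    (hW : IntegrableOn (fun ρ : ℝ => (1 + ρ ^ 2) ^ m * w ρ ^ 2 * ρ) (Set.Ioi 0))
    (hint : IntegrableOn (fun ρ : ℝ => w ρ * ρ) (Set.Ioi 0))
    (hmean : (∫ ρ in Set.Ioi (0 : ℝ), w ρ * ρ) = 0) :
    (∃ C : ℝ, 0 < C ∧ ∀ r : ℝ, 0 < r →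
        |(1 / r) * ∫ ρ in Set.Ioc (0 : ℝ) r, w ρ * ρ|
          ≤ C * (1 + r) ^ (-m)
              * Real.sqrt (∫ ρ in Set.Ioi (0 : ℝ), (1 + ρ ^ 2) ^ m * w ρ ^ 2 * ρ)) ∧
      IntegrableOn
        (fun r : ℝ => ((1 / r) * ∫ ρ in Set.Ioc (0 : ℝ) r, w ρ * ρ) ^ 2 * r)
        (Set.Ioi 0) := by
  have hsm : 0 < Real.sqrt (m - 1) := Real.sqrt_pos.2 (by linarith)
  have h2m : (0:ℝ) < 2 ^ m := Real.rpow_pos_of_pos two_pos m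
  have hC : (0:ℝ) < 2 ^ m + 2 ^ m / Real.sqrt (m - 1) := by positivity
  have hptw := pointwise_bound m hm w hw hW hint hmean
  set C : ℝ := 2 ^ m + 2 ^ m / Real.sqrt (m - 1) with hCdef
  set sqW : ℝ := Real.sqrt (∫ ρ in Set.Ioi (0 : ℝ), (1 + ρ ^ 2) ^ m * w ρ ^ 2 * ρ)
    with hsqWdef
  refine ⟨⟨C, hC, hptw⟩, ?_⟩
  -- integrability
  have hFc : ∀ r ∈ Set.Ioi (0:ℝ), ContinuousAt (fun x => ∫ ρ in Set.Ioc (0:ℝ) x, w ρ * ρ) r := by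
    intro r hr
    have hr0 : (0:ℝ) < r := hr
    have hi : IntegrableOn (fun ρ => w ρ * ρ) (Set.Icc 0 (r + 1)) := by
      rw [integrableOn_Icc_iff_integrableOn_Ioc]
      exact hint.mono_set Set.Ioc_subset_Ioi_self
    exact (intervalIntegral.continuousOn_primitive hi).continuousAt
      (Icc_mem_nhds hr0 (by linarith))
  have hVc : ContinuousOn
      (fun r : ℝ => ((1 / r) * ∫ ρ in Set.Ioc (0 : ℝ) r, w ρ * ρ) ^ 2 * r) (Set.Ioi 0) := by
    intro r hr
    have hr0 : (0:ℝ) < r := hr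
    exact ((((continuousAt_const.div continuousAt_id (ne_of_gt hr0)).mul (hFc r hr)).pow 2).mul
      continuousAt_id).continuousWithinAt
  have hmeas : AEStronglyMeasurable (fun r : ℝ => ((1 / r) * ∫ ρ in Set.Ioc (0 : ℝ) r, w ρ * ρ) ^ 2 * r) (volume.restrict (Set.Ioi 0)) := hVc.aestronglyMeasurable measurableSet_Ioi
  have hgInt : Integrable (fun r : ℝ => (C * sqW) ^ 2 * (1 + r) ^ (1 - 2 * m))
      (volume.restrict (Set.Ioi 0)) := (weight_integrable m hm).const_mul _
  apply Integrable.mono' hgInt hmeas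
  rw [ae_restrict_iff' measurableSet_Ioi]
  apply Filter.Eventually.of_forall
  intro r hr
  have hr0 : (0:ℝ) < r := hr
  have h1r : (0:ℝ) < 1 + r := by linarith
  have hpow : (0:ℝ) < (1 + r) ^ (-m) := Real.rpow_pos_of_pos h1r _
  have hb := hptw r hr0
  have hnn : (0:ℝ) ≤ ((1 / r) * ∫ ρ in Set.Ioc (0 : ℝ) r, w ρ * ρ) ^ 2 * r := by positivity
  rw [Real.norm_of_nonneg hnn]
  have hsq : ((1 / r) * ∫ ρ in Set.Ioc (0 : ℝ) r, w ρ * ρ) ^ 2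
      ≤ (C * (1 + r) ^ (-m) * sqW) ^ 2 := by
    rw [← sq_abs]
    exact pow_le_pow_left₀ (abs_nonneg _) hb 2
  have hexp : ((1 + r) ^ (-m)) ^ 2 * r ≤ (1 + r) ^ (1 - 2 * m) := by
    have e1 : ((1 + r) ^ (-m)) ^ 2 = (1 + r) ^ (-(2 * m)) := by
      rw [← Real.rpow_natCast ((1 + r) ^ (-m)) 2, ← Real.rpow_mul h1r.le]
      push_cast
      rw [show -m * 2 = -(2 * m) by ring]
    rw [e1]
    calc (1 + r) ^ (-(2 * m)) * r ≤ (1 + r) ^ (-(2 * m)) * (1 + r) := by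
          apply mul_le_mul_of_nonneg_left (by linarith) (Real.rpow_nonneg h1r.le _)
      _ = (1 + r) ^ (1 - 2 * m) := by
          rw [show (1:ℝ) - 2 * m = -(2 * m) + 1 by ring, Real.rpow_add h1r, Real.rpow_one]
  calc ((1 / r) * ∫ ρ in Set.Ioc (0 : ℝ) r, w ρ * ρ) ^ 2 * r
      ≤ (C * (1 + r) ^ (-m) * sqW) ^ 2 * r := mul_le_mul_of_nonneg_right hsq hr0.le
    _ = (C * sqW) ^ 2 * (((1 + r) ^ (-m)) ^ 2 * r) := by ring
    _ ≤ (C * sqW) ^ 2 * (1 + r) ^ (1 - 2 * m) :=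
        mul_le_mul_of_nonneg_left hexp (by positivity)
end

section
/- Let $f(t,r) = \frac{1}{4\pi(1+t)} e^{-r^2/(4(1+t))}$ and $u(t,x,y,z) = f(t,\sqrt{x^2+y^2})\, e_z$, a vertical shear flow. Then $u$ is divergence-free, $(u\cdot\nabla)u = 0$, and $u$ solves the Navier–Stokes equations $\partial_t u + (u\cdot\nabla)u = \Delta u - \nabla p$ with $p = 0$. Moreover, $\sqrt{t}\,\|u(t)\|_{L^2(\mathbb{R}^2 \times [0,2\pi L])}$ converges to a nonzero limit as $t \to \infty$. -/
open Real MeasureTheory Filter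

/-- Partial derivative in direction `i` of a scalar field on `ℝ³`. -/
noncomputable def pd (i : Fin 3) (f : (Fin 3 → ℝ) → ℝ) : (Fin 3 → ℝ) → ℝ :=
  fun x => fderiv ℝ f x (Pi.single i 1)

/-- Gaussian self-similar profile. -/
noncomputable def fG (t r : ℝ) : ℝ :=
  (1 / (4 * π * (1 + t))) * Real.exp (-r ^ 2 / (4 * (1 + t)))

/-- The vertical shear flow `u = f(t,r) e_z`. -/
noncomputable def uSh (t : ℝ) (x : Fin 3 → ℝ) : Fin 3 → ℝ :=
  fun i => if i = 2 then fG t (Real.sqrt (x 0 ^ 2 + x 1 ^ 2)) else 0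

lemma pd_const (i : Fin 3) (c : ℝ) : pd i (fun _ => c) = fun _ => 0 := by
  funext x; simp [pd]

lemma pd_prod (F G F' G' : ℝ → ℝ) (hF : ∀ s, HasDerivAt F (F' s) s)
    (hG : ∀ s, HasDerivAt G (G' s) s) (i : Fin 3) :
    pd i (fun y => F (y 0) * G (y 1)) = fun x =>
      if i = 0 then F' (x 0) * G (x 1) else if i = 1 then F (x 0) * G' (x 1) else 0 := by
  funext x
  have h0 : HasFDerivAt (fun y : Fin 3 → ℝ => F (y 0))
      (((1 : ℝ →L[ℝ] ℝ).smulRight (F' (x 0))).comp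
        (ContinuousLinearMap.proj (R := ℝ) (φ := fun _ : Fin 3 => ℝ) 0)) x :=
    (hF (x 0)).hasFDerivAt.comp x ((ContinuousLinearMap.proj 0 : (Fin 3 → ℝ) →L[ℝ] ℝ).hasFDerivAt)
  have h1 : HasFDerivAt (fun y : Fin 3 → ℝ => G (y 1))
      (((1 : ℝ →L[ℝ] ℝ).smulRight (G' (x 1))).comp
        (ContinuousLinearMap.proj (R := ℝ) (φ := fun _ : Fin 3 => ℝ) 1)) x :=
    (hG (x 1)).hasFDerivAt.comp x ((ContinuousLinearMap.proj 1 : (Fin 3 → ℝ) →L[ℝ] ℝ).hasFDerivAt)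
  have h := (h0.mul h1).fderiv
  rw [pd, show (fun y : Fin 3 → ℝ => F (y 0) * G (y 1))
      = ((fun y : Fin 3 → ℝ => F (y 0)) * fun y => G (y 1)) from rfl, h]
  fin_cases i <;> simp [Pi.single_apply] <;> try ring

/-- 1D Gaussian profile. -/
noncomputable def Φ (a s : ℝ) : ℝ := Real.exp (-s ^ 2 * a)

lemma hasDerivAt_Φ (a s : ℝ) : HasDerivAt (Φ a) (Φ a s * (-(2 * s) * a)) s := by
  have h1 : HasDerivAt (fun s : ℝ => -s ^ 2 * a) (-(2 * s) * a) s := by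
    have := ((hasDerivAt_pow 2 s).neg).mul_const a
    simpa using this
  unfold Φ; exact h1.exp

lemma hasDerivAt_Φ' (a s : ℝ) :
    HasDerivAt (fun s => Φ a s * (-(2 * s) * a))
      (Φ a s * (-(2 * s) * a) * (-(2 * s) * a) + Φ a s * (-2 * a)) s := by
  have h2 : HasDerivAt (fun s : ℝ => -(2 * s) * a) (-2 * a) s := by
    have := ((hasDerivAt_id s).const_mul (2:ℝ)).neg.mul_const a
    simpa using this
  exact ((hasDerivAt_Φ a s).mul h2).congr_deriv (by ring)

/-- closed form of the third component -/
lemma u2_eq (t : ℝ) : (fun y => uSh t y 2) =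
    fun y => ((4 * π * (1 + t))⁻¹ * Φ ((4 * (1 + t))⁻¹) (y 0)) * Φ ((4 * (1 + t))⁻¹) (y 1) := by
  funext y
  have hq : (0:ℝ) ≤ y 0 ^ 2 + y 1 ^ 2 := by positivity
  show (if (2:Fin 3) = 2 then fG t (Real.sqrt (y 0 ^ 2 + y 1 ^ 2)) else 0) = _
  rw [if_pos rfl, fG, Real.sq_sqrt hq]
  unfold Φ
  rw [one_div, mul_assoc ((4 * π * (1 + t))⁻¹), ← Real.exp_add]
  congr 1
  ring

lemma u_other (t : ℝ) (i : Fin 3) (hi : i ≠ 2) : (fun y => uSh t y i) = fun _ => 0 := by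
  funext y; simp [uSh, hi]

lemma convective_zero (t : ℝ) (x : Fin 3 → ℝ) (i : Fin 3) :
    (∑ j, uSh t x j * pd j (fun y => uSh t y i) x) = 0 := by
  set a := (4 * (1 + t))⁻¹ with ha
  set c := (4 * π * (1 + t))⁻¹ with hc
  have hF : ∀ s, HasDerivAt (fun s => c * Φ a s) (c * (Φ a s * (-(2 * s) * a))) s :=
    fun s => (hasDerivAt_Φ a s).const_mul c
  have hpd2 := pd_prod (fun s => c * Φ a s) (Φ a) _ _ hF (hasDerivAt_Φ a)
  have h2 : ∀ i : Fin 3, pd 2 (fun y => uSh t y i) x = 0 := by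
    intro i
    by_cases hi : i = 2
    · subst hi; rw [u2_eq t, hpd2]; simp
    · rw [u_other t i hi, pd_const]
  rw [Fin.sum_univ_three]
  have h0 : uSh t x 0 = 0 := by simp [uSh]
  have h1 : uSh t x 1 = 0 := by simp [uSh]
  rw [h0, h1, h2 i]; ring

lemma integral_r_exp (b : ℝ) (hb : 0 < b) :
    ∫ r in Set.Ioi (0:ℝ), r * Real.exp (-b * r ^ 2) = (2 * b)⁻¹ := by
  have hderiv : ∀ r ∈ Set.Ici (0:ℝ),
      HasDerivAt (fun r => -(2 * b)⁻¹ * Real.exp (-b * r ^ 2))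
        (r * Real.exp (-b * r ^ 2)) r := by
    intro r _
    have h1 : HasDerivAt (fun r : ℝ => -b * r ^ 2) (-b * (2 * r)) r := by
      simpa [mul_comm] using (hasDerivAt_pow 2 r).const_mul (-b)
    have h3 := (h1.exp).const_mul (-(2 * b)⁻¹)
    refine h3.congr_deriv ?_
    have hb' : (2 * b)⁻¹ * (2 * b) = 1 := inv_mul_cancel₀ (by positivity)
    linear_combination (r * Real.exp (-b * r ^ 2)) * hb'
  have hint : IntegrableOn (fun r : ℝ => r * Real.exp (-b * r ^ 2)) (Set.Ioi 0) :=
    (integrable_mul_exp_neg_mul_sq hb).integrableOn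
  have htend : Tendsto (fun r : ℝ => -(2 * b)⁻¹ * Real.exp (-b * r ^ 2)) atTop (nhds 0) := by
    have hsq : Tendsto (fun r : ℝ => b * r ^ 2) atTop atTop :=
      (tendsto_pow_atTop (two_ne_zero)).const_mul_atTop hb
    have h2 : Tendsto (fun r : ℝ => -b * r ^ 2) atTop atBot := by
      have := tendsto_neg_atTop_atBot.comp hsq
      simpa [Function.comp_def, neg_mul] using this
    have := (Real.tendsto_exp_atBot.comp h2).const_mul (-(2 * b)⁻¹)
    simpa using this
  have hres := integral_Ioi_of_hasDerivAt_of_tendsto' hderiv hint htend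
  rw [hres]
  norm_num

lemma int_fG (t : ℝ) (ht : 0 ≤ t) :
    ∫ r in Set.Ioi (0:ℝ), 2 * π * fG t r ^ 2 * r = (8 * π * (1 + t))⁻¹ := by
  have ht1 : (0:ℝ) < 1 + t := by linarith
  have hb : (0:ℝ) < (2 * (1 + t))⁻¹ := by positivity
  have hfun : ∀ r : ℝ, 2 * π * fG t r ^ 2 * r
      = (2 * π * (1 / (4 * π * (1 + t))) ^ 2) * (r * Real.exp (-(2 * (1 + t))⁻¹ * r ^ 2)) := by
    intro r
    have hexp : Real.exp (-r ^ 2 / (4 * (1 + t))) ^ 2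
        = Real.exp (-(2 * (1 + t))⁻¹ * r ^ 2) := by
      rw [← Real.exp_nat_mul]
      congr 1
      push_cast
      field_simp
      ring
    rw [fG, mul_pow, hexp]
    ring
  simp_rw [hfun]
  rw [MeasureTheory.integral_const_mul, integral_r_exp _ hb]
  have hπ := Real.pi_ne_zero
  field_simp
  ring


theorem shear_flow_solves_NS (L : ℝ) (hL : 0 < L) :
    -- divergence free
    (∀ t : ℝ, ∀ x : Fin 3 → ℝ, (∑ i, pd i (fun y => uSh t y i) x) = 0) ∧
    -- the convective term vanishes
    (∀ t : ℝ, ∀ x : Fin 3 → ℝ, ∀ i : Fin 3,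
      (∑ j, uSh t x j * pd j (fun y => uSh t y i) x) = 0) ∧
    -- Navier–Stokes with zero pressure
    (∀ t : ℝ, 0 ≤ t → ∀ x : Fin 3 → ℝ, ∀ i : Fin 3,
      deriv (fun τ => uSh τ x i) t + (∑ j, uSh t x j * pd j (fun y => uSh t y i) x)
        = (∑ j, pd j (pd j (fun y => uSh t y i)) x) - 0) ∧
    -- sharp decay of the energy norm
    (∃ l : ℝ, l ≠ 0 ∧
      Tendsto
        (fun t : ℝ => Real.sqrt t *
          Real.sqrt (2 * π * L * ∫ r in Set.Ioi (0 : ℝ), 2 * π * fG t r ^ 2 * r))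
        atTop (nhds l)) := by
  refine ⟨?_, fun t x i => convective_zero t x i, ?_, ?_⟩
  · -- divergence free
    intro t x
    set a := (4 * (1 + t))⁻¹ with ha
    set c := (4 * π * (1 + t))⁻¹ with hc
    have hF : ∀ s, HasDerivAt (fun s => c * Φ a s) (c * (Φ a s * (-(2 * s) * a))) s :=
      fun s => (hasDerivAt_Φ a s).const_mul c
    have hpd2 := pd_prod (fun s => c * Φ a s) (Φ a) _ _ hF (hasDerivAt_Φ a)
    rw [Fin.sum_univ_three, u_other t 0 (by decide), u_other t 1 (by decide), u2_eq t,
      pd_const, pd_const, hpd2]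
    simp
  · -- Navier-Stokes
    intro t ht x i
    rw [convective_zero t x i, Fin.sum_univ_three]
    by_cases hi : i = 2
    · subst hi
      have ht1 : (0:ℝ) < 1 + t := by linarith
      set a := (4 * (1 + t))⁻¹ with ha
      set c := (4 * π * (1 + t))⁻¹ with hc
      have hq : (0:ℝ) ≤ x 0 ^ 2 + x 1 ^ 2 := by positivity
      -- time derivative
      have hfun : (fun τ => uSh τ x 2)
          = fun τ => (4 * π * (1 + τ))⁻¹
              * Real.exp (-(x 0 ^ 2 + x 1 ^ 2) * (4 * (1 + τ))⁻¹) := by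
        funext τ
        show (if (2:Fin 3) = 2 then fG τ (Real.sqrt (x 0 ^ 2 + x 1 ^ 2)) else 0) = _
        rw [if_pos rfl, fG, Real.sq_sqrt hq, one_div, div_eq_mul_inv]
      have h1 : HasDerivAt (fun τ : ℝ => 4 * π * (1 + τ)) (4 * π * 1) t :=
        ((hasDerivAt_id t).const_add 1).const_mul (4 * π)
      have h2 : HasDerivAt (fun τ : ℝ => 4 * (1 + τ)) (4 * 1) t :=
        ((hasDerivAt_id t).const_add 1).const_mul 4
      have hinv1 := h1.inv (by positivity)
      have hinv2 := h2.inv (by positivity)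
      have h3 := hinv2.const_mul (-(x 0 ^ 2 + x 1 ^ 2))
      have h4 := h3.exp
      have htime := hinv1.mul h4
      have htime' : HasDerivAt (fun τ => (4 * π * (1 + τ))⁻¹ * Real.exp (-(x 0 ^ 2 + x 1 ^ 2) * (4 * (1 + τ))⁻¹))
          (-(4 * π * 1) / (4 * π * (1 + t)) ^ 2 * Real.exp (-(x 0 ^ 2 + x 1 ^ 2) * (4 * (1 + t))⁻¹) +
            (4 * π * (1 + t))⁻¹ * (Real.exp (-(x 0 ^ 2 + x 1 ^ 2) * (4 * (1 + t))⁻¹) *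
              (-(x 0 ^ 2 + x 1 ^ 2) * (-(4 * 1) / (4 * (1 + t)) ^ 2)))) t := htime
      rw [hfun, htime'.deriv]
      -- laplacian
      have hF : ∀ s, HasDerivAt (fun s => c * Φ a s) (c * (Φ a s * (-(2 * s) * a))) s :=
        fun s => (hasDerivAt_Φ a s).const_mul c
      have hF' : ∀ s, HasDerivAt (fun s => c * (Φ a s * (-(2 * s) * a)))
          (c * (Φ a s * (-(2 * s) * a) * (-(2 * s) * a) + Φ a s * (-2 * a))) s :=
        fun s => (hasDerivAt_Φ' a s).const_mul c
      have e0 : pd 0 (fun y => uSh t y 2)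
          = fun y => (fun s => c * (Φ a s * (-(2 * s) * a))) (y 0) * Φ a (y 1) := by
        rw [u2_eq t, pd_prod _ _ _ _ hF (hasDerivAt_Φ a)]
        funext y; simp
      have e1 : pd 1 (fun y => uSh t y 2)
          = fun y => ((fun s => c * Φ a s) (y 0)) * (fun s => Φ a s * (-(2 * s) * a)) (y 1) := by
        rw [u2_eq t, pd_prod _ _ _ _ hF (hasDerivAt_Φ a)]
        funext y; simp
      have e2 : pd 2 (fun y => uSh t y 2) = fun _ => 0 := by
        rw [u2_eq t, pd_prod _ _ _ _ hF (hasDerivAt_Φ a)]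
        funext y; simp
      rw [e0, e1, e2, pd_const,
        pd_prod _ _ _ _ hF' (hasDerivAt_Φ a),
        pd_prod _ _ _ _ hF (hasDerivAt_Φ' a)]
      simp only [if_pos rfl, if_neg (by decide : ¬(0:Fin 3) = 1),
        if_neg (by decide : ¬(1:Fin 3) = 0), if_pos rfl, eq_self_iff_true, if_true]
      -- now a pure computation
      have hE : Φ a (x 0) * Φ a (x 1)
          = Real.exp (-(x 0 ^ 2 + x 1 ^ 2) * (4 * (1 + t))⁻¹) := by
        unfold Φ
        rw [← Real.exp_add, ha]
        congr 1
        ring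
      rw [← hE, ha, hc]
      have hπ := Real.pi_ne_zero
      have hs : (1:ℝ) + t ≠ 0 := ne_of_gt ht1
      unfold Φ
      field_simp
      ring
    · -- i ≠ 2 : everything vanishes
      have hz : (fun τ => uSh τ x i) = fun _ => (0:ℝ) := by
        funext τ; simp [uSh, hi]
      rw [hz, u_other t i hi]
      simp only [pd_const]
      simp
  · -- decay of the energy norm
    refine ⟨Real.sqrt (L / 4), (Real.sqrt_pos.mpr (by linarith)).ne', ?_⟩
    have h0 : Tendsto (fun t : ℝ => (1 + t)⁻¹) atTop (nhds 0) := by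
      have := tendsto_inv_atTop_zero.comp (tendsto_atTop_add_const_left atTop (1:ℝ) tendsto_id)
      simpa [Function.comp_def] using this
    have h1 : Tendsto (fun t : ℝ => L / 4 * (1 - (1 + t)⁻¹)) atTop (nhds (L / 4)) := by
      have := ((tendsto_const_nhds (x := (1:ℝ))).sub h0).const_mul (L / 4)
      simpa using this
    have h2 := h1.sqrt
    refine Filter.Tendsto.congr' ?_ h2
    filter_upwards [eventually_ge_atTop (0:ℝ)] with t ht
    rw [int_fG t ht, ← Real.sqrt_mul ht]
    congr 1
    have ht1 : (0:ℝ) < 1 + t := by linarith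
    have hs : (1:ℝ) + t ≠ 0 := ne_of_gt ht1
    have hπ := Real.pi_ne_zero
    field_simp
    ring
end
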